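/- arXiv:1401.6962 — 5 statements merged into one kernel-verified Lean document; each statement's English description precedes it below -/
import Mathlib

section
/- For positive semidefinite matrices A and B, the inequality (rank(A) + rank(B))/2 ≤ rank(A + B) holds, with equality if and only if the column spaces of A and B coincide. -/
/-!
For positive semidefinite `A` and `B`, a vector is killed by `A + B` only if it is killed by both,
so `ker (A + B) = ker A ⊓ ker B`. By rank–nullity the inequality becomes
`2 · dim (ker A ⊓ ker B) ≤ dim ker A + dim ker B`, with equality exactly when `ker A = ker B`.
For symmetric matrices the range is the orthogonal complement of the kernel, so equal kernels
means equal column spaces.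
-/

open Matrix Module

section FinrankInf

variable {K V : Type*} [DivisionRing K] [AddCommGroup V] [Module K V] [FiniteDimensional K V]

theorem Submodule.two_mul_finrank_inf_le (U W : Submodule K V) :
    2 * finrank K ↥(U ⊓ W) ≤ finrank K U + finrank K W := by
  have := Submodule.finrank_mono (inf_le_left : U ⊓ W ≤ U)
  have := Submodule.finrank_mono (inf_le_right : U ⊓ W ≤ W)
  omega

theorem Submodule.two_mul_finrank_inf_eq_iff {U W : Submodule K V} :
    2 * finrank K ↥(U ⊓ W) = finrank K U + finrank K W ↔ U = W := by
  refine ⟨fun h ↦ ?_, fun h ↦ by rw [h, inf_idem]; ring⟩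
  have := Submodule.finrank_mono (inf_le_left : U ⊓ W ≤ U)
  have := Submodule.finrank_mono (inf_le_right : U ⊓ W ≤ W)
  have hinfU : U ⊓ W = U := Submodule.eq_of_le_of_finrank_eq inf_le_left (by omega)
  have hinfW : U ⊓ W = W := Submodule.eq_of_le_of_finrank_eq inf_le_right (by omega)
  exact hinfU.symm.trans hinfW

end FinrankInf

theorem LinearMap.IsSymmetric.range_eq_range_iff {𝕜 E : Type*} [RCLike 𝕜]
    [NormedAddCommGroup E] [InnerProductSpace 𝕜 E] [FiniteDimensional 𝕜 E]
    {S T : E →ₗ[𝕜] E} (hS : S.IsSymmetric) (hT : T.IsSymmetric) :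
    range S = range T ↔ ker S = ker T := by
  rw [← hS.orthogonal_range, ← hT.orthogonal_range]
  exact ⟨congrArg _, fun h ↦ by simpa using congrArg Submodule.orthogonal h⟩

theorem Matrix.rank_add_finrank_ker_mulVecLin {m n R : Type*} [Fintype n] [Field R]
    (M : Matrix m n R) : M.rank + finrank R (LinearMap.ker M.mulVecLin) = Fintype.card n := by
  rw [rank, LinearMap.finrank_range_add_finrank_ker, finrank_fintype_fun_eq_card]

section PosSemidef

variable {𝕜 n : Type*} [RCLike 𝕜] [Fintype n]

open scoped ComplexOrder in
theorem Matrix.PosSemidef.ker_mulVecLin_add {A B : Matrix n n 𝕜}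
    (hA : A.PosSemidef) (hB : B.PosSemidef) :
    LinearMap.ker (A + B).mulVecLin = LinearMap.ker A.mulVecLin ⊓ LinearMap.ker B.mulVecLin := by
  ext x
  simp only [LinearMap.mem_ker, Submodule.mem_inf, mulVecLin_apply, add_mulVec]
  refine ⟨fun h ↦ ?_, fun ⟨hAx, hBx⟩ ↦ by rw [hAx, hBx, add_zero]⟩
  have hsum : star x ⬝ᵥ A *ᵥ x + star x ⬝ᵥ B *ᵥ x = 0 := by
    rw [← dotProduct_add, h, dotProduct_zero]
  rw [add_eq_zero_iff_of_nonneg (hA.dotProduct_mulVec_nonneg x)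
    (hB.dotProduct_mulVec_nonneg x)] at hsum
  exact ⟨(hA.dotProduct_mulVec_zero_iff x).1 hsum.1, (hB.dotProduct_mulVec_zero_iff x).1 hsum.2⟩

theorem Matrix.IsHermitian.range_mulVecLin_eq_iff [DecidableEq n] {A B : Matrix n n 𝕜}
    (hA : A.IsHermitian) (hB : B.IsHermitian) :
    LinearMap.range A.mulVecLin = LinearMap.range B.mulVecLin ↔
      LinearMap.ker A.mulVecLin = LinearMap.ker B.mulVecLin := by
  let e := (WithLp.linearEquiv 2 𝕜 (n → 𝕜)).toLinearMap
  have range_eq (M : Matrix n n 𝕜) :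
      LinearMap.range (toEuclideanLin M) = (LinearMap.range M.mulVecLin).comap e := by
    ext y
    simp only [LinearMap.mem_range, Submodule.mem_comap, mulVecLin_apply, toLpLin_apply]
    constructor
    · rintro ⟨x, rfl⟩
      exact ⟨x.ofLp, rfl⟩
    · rintro ⟨x, hx⟩
      exact ⟨WithLp.toLp 2 x, by simp [hx, e]⟩
  have ker_eq (M : Matrix n n 𝕜) :
      LinearMap.ker (toEuclideanLin M) = (LinearMap.ker M.mulVecLin).comap e := by
    ext y
    simp [e, toLpLin_apply]
  have he := Submodule.comap_injective_of_surjective (WithLp.linearEquiv 2 𝕜 (n → 𝕜)).surjective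
  rw [← he.eq_iff, ← he.eq_iff (a := LinearMap.ker _), ← range_eq, ← range_eq, ← ker_eq,
    ← ker_eq]
  exact (isSymmetric_toEuclideanLin_iff.2 hA).range_eq_range_iff
    (isSymmetric_toEuclideanLin_iff.2 hB)

end PosSemidef

theorem stmt_3 (N : ℕ) (A B : Matrix (Fin N) (Fin N) ℝ)
    (hA : A.PosSemidef) (hB : B.PosSemidef) :
    A.rank + B.rank ≤ 2 * (A + B).rank ∧
      (A.rank + B.rank = 2 * (A + B).rank ↔
        LinearMap.range A.mulVecLin = LinearMap.range B.mulVecLin) := by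
  have nullityA := A.rank_add_finrank_ker_mulVecLin
  have nullityB := B.rank_add_finrank_ker_mulVecLin
  have nullityAB := (A + B).rank_add_finrank_ker_mulVecLin
  rw [hA.ker_mulVecLin_add hB] at nullityAB
  have hinf := Submodule.two_mul_finrank_inf_le (LinearMap.ker A.mulVecLin)
    (LinearMap.ker B.mulVecLin)
  refine ⟨by omega, ?_⟩
  rw [hA.isHermitian.range_mulVecLin_eq_iff hB.isHermitian,
    ← Submodule.two_mul_finrank_inf_eq_iff]
  omega
end

section
/- Let S₁, S₂ be positive semidefinite N×N matrices with ranks r₁, r₂, and let r₁₂ = rank(S₁+S₂). Then the ratio det((S₁+S₂)/2 + σ²·I) / sqrt(det(S₁ + σ²·I)·det(S₂ + σ²·I)) equals 2^{−r₁₂}·σ^{2((r₁+r₂)/2 − r₁₂)}·(pdet(S₁+S₂)/sqrt(pdet(S₁)·pdet(S₂)))·(1 + o(1)) as σ² → 0. -/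
open Matrix Filter

/-- The pseudo-determinant of a Hermitian real matrix: the product of its
nonzero eigenvalues. -/
noncomputable def pdet {N : ℕ} (S : Matrix (Fin N) (Fin N) ℝ) (h : S.IsHermitian) : ℝ :=
  ∏ i ∈ Finset.univ.filter (fun i => h.eigenvalues i ≠ 0), h.eigenvalues i

/-!
For Hermitian `S`, `det (S + t) = ∏ᵢ (λᵢ + t) = t ^ (N - rank S) * ∏_{λᵢ ≠ 0} (λᵢ + t)`, and the
last product is continuous in `t` with value `pdet S` at `t = 0`, positive when `S` is positive
semidefinite. Applied to `S₁`, `S₂` and `(S₁ + S₂) / 2`, this isolates the exact power of `t` in the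
ratio, and what remains is a ratio of such products, which tends to
`pdet (S₁ + S₂) / √(pdet S₁ * pdet S₂)`.
-/

namespace Matrix.IsHermitian

variable {N : ℕ} {S : Matrix (Fin N) (Fin N) ℝ}

noncomputable def pdetShift (hS : S.IsHermitian) (t : ℝ) : ℝ :=
  ∏ i ∈ Finset.univ.filter (fun i => hS.eigenvalues i ≠ 0), (hS.eigenvalues i + t)

lemma pdetShift_zero (hS : S.IsHermitian) : hS.pdetShift 0 = pdet S hS := by
  simp [pdetShift, pdet]

@[fun_prop]
lemma continuous_pdetShift (hS : S.IsHermitian) : Continuous hS.pdetShift := by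
  unfold pdetShift
  fun_prop

lemma det_add_smul_one_eq_prod (hS : S.IsHermitian) (t : ℝ) :
    (S + t • (1 : Matrix (Fin N) (Fin N) ℝ)).det = ∏ i, (hS.eigenvalues i + t) := by
  have hchar := congrArg (Polynomial.eval (-t)) hS.charpoly_eq
  rw [eval_charpoly, Polynomial.eval_prod] at hchar
  have hneg : S + t • (1 : Matrix (Fin N) (Fin N) ℝ) = -(scalar (Fin N) (-t) - S) := by
    ext i j; by_cases hij : i = j <;> simp [hij]
  rw [hneg, det_neg, hchar, ← Finset.card_univ, ← Finset.prod_const, ← Finset.prod_mul_distrib]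
  simp

lemma card_eigenvalues_eq_zero (hS : S.IsHermitian) :
    (Finset.univ.filter (fun i => hS.eigenvalues i = 0)).card = N - S.rank := by
  have hsplit := Finset.card_filter_add_card_filter_not (s := Finset.univ)
    (fun i => hS.eigenvalues i = 0)
  rw [hS.rank_eq_card_non_zero_eigs, Fintype.card_subtype]
  simp only [Finset.card_univ, Fintype.card_fin, ← ne_eq] at hsplit
  omega

lemma det_add_smul_one_eq_pow_mul (hS : S.IsHermitian) (t : ℝ) :
    (S + t • (1 : Matrix (Fin N) (Fin N) ℝ)).det = t ^ (N - S.rank) * hS.pdetShift t := by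
  rw [hS.det_add_smul_one_eq_prod,
    ← Finset.prod_filter_mul_prod_filter_not Finset.univ (fun i => hS.eigenvalues i = 0),
    Finset.prod_congr rfl fun i hi => by rw [(Finset.mem_filter.mp hi).2, zero_add],
    Finset.prod_const, hS.card_eigenvalues_eq_zero, pdetShift]

lemma det_smul_add_smul_one_eq_pow_mul (hS : S.IsHermitian) {c : ℝ} (hc : c ≠ 0) (t : ℝ) :
    (c • S + t • (1 : Matrix (Fin N) (Fin N) ℝ)).det =
      c ^ S.rank * t ^ (N - S.rank) * hS.pdetShift (t / c) := by
  have hscale : c • S + t • (1 : Matrix (Fin N) (Fin N) ℝ) = c • (S + (t / c) • 1) := by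
    rw [smul_add, smul_smul, mul_div_cancel₀ t hc]
  have hN : c ^ N = c ^ S.rank * c ^ (N - S.rank) := by
    rw [← pow_add, Nat.add_sub_cancel' (S.rank_le_width)]
  rw [hscale, det_smul, Fintype.card_fin, hS.det_add_smul_one_eq_pow_mul, hN, div_pow]
  field_simp

end Matrix.IsHermitian

namespace Matrix.PosSemidef

variable {N : ℕ} {S : Matrix (Fin N) (Fin N) ℝ}

lemma pdetShift_pos (hS : S.PosSemidef) {t : ℝ} (ht : 0 ≤ t) : 0 < hS.isHermitian.pdetShift t :=
  Finset.prod_pos fun i hi =>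
    add_pos_of_pos_of_nonneg ((hS.eigenvalues_nonneg i).lt_of_ne' (Finset.mem_filter.mp hi).2) ht

lemma pdet_pos (hS : S.PosSemidef) : 0 < pdet S hS.isHermitian :=
  hS.isHermitian.pdetShift_zero ▸ hS.pdetShift_pos le_rfl

end Matrix.PosSemidef

lemma Matrix.pow_sub_rank_eq_rpow {N : ℕ} (S : Matrix (Fin N) (Fin N) ℝ) (t : ℝ) :
    t ^ (N - S.rank) = t ^ ((N : ℝ) - S.rank) := by
  rw [← Real.rpow_natCast, Nat.cast_sub S.rank_le_width]

lemma Real.sqrt_rpow_mul_mul_rpow_mul {t : ℝ} (ht : 0 < t) (a b x y : ℝ) :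
    √(t ^ a * x * (t ^ b * y)) = t ^ ((a + b) / 2) * √(x * y) := by
  rw [mul_mul_mul_comm, ← Real.rpow_add ht, Real.sqrt_mul (Real.rpow_nonneg ht.le _),
    Real.sqrt_eq_rpow, ← Real.rpow_mul ht.le, mul_one_div]

section Ratio

variable {N : ℕ} {S₁ S₂ : Matrix (Fin N) (Fin N) ℝ}

noncomputable def regularRatio (h₁ : S₁.PosSemidef) (h₂ : S₂.PosSemidef) (t : ℝ) : ℝ :=
  (h₁.add h₂).isHermitian.pdetShift (2 * t) /
    √(h₁.isHermitian.pdetShift t * h₂.isHermitian.pdetShift t)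

lemma regularRatio_zero (h₁ : S₁.PosSemidef) (h₂ : S₂.PosSemidef) :
    regularRatio h₁ h₂ 0 =
      pdet (S₁ + S₂) (h₁.add h₂).isHermitian /
        √(pdet S₁ h₁.isHermitian * pdet S₂ h₂.isHermitian) := by
  simp only [regularRatio, mul_zero, Matrix.IsHermitian.pdetShift_zero]

lemma regularRatio_zero_pos (h₁ : S₁.PosSemidef) (h₂ : S₂.PosSemidef) :
    0 < regularRatio h₁ h₂ 0 := by
  have := h₁.pdet_pos; have := h₂.pdet_pos; have := (h₁.add h₂).pdet_pos
  rw [regularRatio_zero]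
  positivity

lemma continuousAt_regularRatio (h₁ : S₁.PosSemidef) (h₂ : S₂.PosSemidef) :
    ContinuousAt (regularRatio h₁ h₂) 0 := by
  have := h₁.pdetShift_pos le_rfl; have := h₂.pdetShift_pos le_rfl
  unfold regularRatio
  fun_prop (disch := positivity)

lemma det_midpoint_add_smul_one_div_sqrt_eq (h₁ : S₁.PosSemidef) (h₂ : S₂.PosSemidef) {t : ℝ}
    (ht : 0 < t) :
    ((1 / 2 : ℝ) • (S₁ + S₂) + t • (1 : Matrix (Fin N) (Fin N) ℝ)).det /
        √((S₁ + t • (1 : Matrix (Fin N) (Fin N) ℝ)).det *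
          (S₂ + t • (1 : Matrix (Fin N) (Fin N) ℝ)).det) =
      2 ^ (-((S₁ + S₂).rank : ℝ)) * t ^ (((S₁.rank : ℝ) + S₂.rank) / 2 - (S₁ + S₂).rank) *
        regularRatio h₁ h₂ t := by
  have hhalf : (1 / 2 : ℝ) ^ (S₁ + S₂).rank = 2 ^ (-((S₁ + S₂).rank : ℝ)) := by
    rw [Real.rpow_neg zero_le_two, Real.rpow_natCast, one_div, inv_pow]
  have hexp : t ^ ((N : ℝ) - (S₁ + S₂).rank) =
      t ^ (((S₁.rank : ℝ) + S₂.rank) / 2 - (S₁ + S₂).rank) *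
        t ^ (((N : ℝ) - S₁.rank + (N - S₂.rank)) / 2) := by
    rw [← Real.rpow_add ht]; ring_nf
  rw [(h₁.add h₂).isHermitian.det_smul_add_smul_one_eq_pow_mul (one_div_ne_zero two_ne_zero),
    h₁.isHermitian.det_add_smul_one_eq_pow_mul, h₂.isHermitian.det_add_smul_one_eq_pow_mul,
    pow_sub_rank_eq_rpow, pow_sub_rank_eq_rpow, pow_sub_rank_eq_rpow, hhalf, hexp,
    Real.sqrt_rpow_mul_mul_rpow_mul ht, regularRatio, show t / (1 / 2) = 2 * t by ring]
  field_simp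

end Ratio

theorem stmt_6 (N : ℕ) (S₁ S₂ : Matrix (Fin N) (Fin N) ℝ)
    (h₁ : S₁.PosSemidef) (h₂ : S₂.PosSemidef) :
    Tendsto
      (fun t : ℝ =>
        (((1 / 2 : ℝ) • (S₁ + S₂) + t • (1 : Matrix (Fin N) (Fin N) ℝ)).det /
          Real.sqrt ((S₁ + t • (1 : Matrix (Fin N) (Fin N) ℝ)).det *
            (S₂ + t • (1 : Matrix (Fin N) (Fin N) ℝ)).det)) /
        ((2 : ℝ) ^ (-((S₁ + S₂).rank : ℝ)) *
          t ^ (((S₁.rank : ℝ) + S₂.rank) / 2 - (S₁ + S₂).rank) *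
          (pdet (S₁ + S₂) (h₁.add h₂).isHermitian /
            Real.sqrt (pdet S₁ h₁.isHermitian * pdet S₂ h₂.isHermitian))))
      (nhdsWithin 0 (Set.Ioi 0)) (nhds 1) := by
  have hR₀ := regularRatio_zero_pos h₁ h₂
  have hlim := ((continuousAt_regularRatio h₁ h₂).tendsto.mono_left
    (nhdsWithin_le_nhds (s := Set.Ioi 0))).div_const (regularRatio h₁ h₂ 0)
  rw [div_self hR₀.ne'] at hlim
  refine hlim.congr' ?_
  filter_upwards [self_mem_nhdsWithin] with t (ht : 0 < t)
  rw [det_midpoint_add_smul_one_div_sqrt_eq h₁ h₂ ht, ← regularRatio_zero h₁ h₂]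
  field_simp
end

section
/- Let S₁, S₂ be positive semidefinite with rank(S₁)+rank(S₂) = 2·rank(S₁+S₂) (equivalently im(S₁)=im(S₂)). Then the limit as σ²→0 of det((S₁+S₂)/2 + σ²I)/sqrt(det(S₁+σ²I)·det(S₂+σ²I)) exists, is finite, and equals 2^{−r}·pdet(S₁+S₂)/sqrt(pdet(S₁)·pdet(S₂)) where r = rank(S₁+S₂). In particular the Bhattacharyya upper bound sqrt(P₁P₂)·e^{−K} with K = (1/2)·log of that ratio does not tend to zero (error floor). -/
open Matrix Filter

namespace Matrix.IsHermitian

variable {n : Type*} [Fintype n] [DecidableEq n] {S : Matrix n n ℝ}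

theorem det_add_smul_one (hS : S.IsHermitian) (t : ℝ) :
    (S + t • 1).det = ∏ i, (hS.eigenvalues i + t) := by
  have hneg : S + t • 1 = -(scalar n (-t) - S) := by
    rw [scalar_apply, ← smul_one_eq_diagonal, neg_smul]; abel
  rw [hneg, det_neg, ← eval_charpoly, hS.charpoly_eq, Polynomial.eval_prod]
  simp only [Polynomial.eval_sub, Polynomial.eval_X, Polynomial.eval_C, RCLike.ofReal_real_eq_id,
    id]
  rw [← Finset.card_univ, ← Finset.prod_neg]
  exact Finset.prod_congr rfl fun i _ => by ring

noncomputable def shiftedPdet (hS : S.IsHermitian) (t : ℝ) : ℝ :=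
  ∏ i ∈ Finset.univ.filter (fun i => hS.eigenvalues i ≠ 0), (hS.eigenvalues i + t)

theorem det_add_smul_one_eq_shiftedPdet_mul_pow (hS : S.IsHermitian) (t : ℝ) :
    (S + t • 1).det = hS.shiftedPdet t * t ^ (Fintype.card n - S.rank) := by
  have hker : Fintype.card n - S.rank =
      (Finset.univ.filter (fun i => ¬ hS.eigenvalues i ≠ 0)).card := by
    rw [hS.rank_eq_card_non_zero_eigs, Fintype.card_subtype, ← Finset.card_univ,
      ← Finset.card_filter_add_card_filter_not (s := Finset.univ)
        (p := fun i => hS.eigenvalues i ≠ 0), Nat.add_sub_cancel_left]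
  rw [hS.det_add_smul_one, shiftedPdet, hker, ← Finset.prod_const,
    ← Finset.prod_filter_mul_prod_filter_not Finset.univ (fun i => hS.eigenvalues i ≠ 0)]
  congr 1
  refine Finset.prod_congr rfl fun i hi => ?_
  rw [(Finset.mem_filter.mp hi).2 |> not_not.mp, zero_add]

theorem continuous_shiftedPdet (hS : S.IsHermitian) : Continuous hS.shiftedPdet :=
  continuous_finsetProd _ fun _ _ => by fun_prop

theorem det_half_smul_add_smul_one (hS : S.IsHermitian) (t : ℝ) :
    ((1 / 2 : ℝ) • S + t • 1).det =
      (2 ^ S.rank)⁻¹ * (hS.shiftedPdet (2 * t) * t ^ (Fintype.card n - S.rank)) := by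
  have hsplit : (2 : ℝ) ^ Fintype.card n = 2 ^ S.rank * 2 ^ (Fintype.card n - S.rank) := by
    rw [← pow_add, Nat.add_sub_cancel' (rank_le_card_width S)]
  have hscale : (1 / 2 : ℝ) • S + t • 1 = (2⁻¹ : ℝ) • (S + (2 * t) • 1) := by module
  rw [hscale, det_smul, hS.det_add_smul_one_eq_shiftedPdet_mul_pow, mul_pow, inv_pow, hsplit]
  field_simp

end Matrix.IsHermitian

theorem Matrix.PosSemidef.shiftedPdet_pos {n : Type*} [Fintype n] [DecidableEq n]
    {S : Matrix n n ℝ} (hS : S.PosSemidef) {t : ℝ} (ht : 0 ≤ t) :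
    0 < hS.isHermitian.shiftedPdet t :=
  Finset.prod_pos fun i hi =>
    add_pos_of_pos_of_nonneg
      ((hS.eigenvalues_nonneg i).lt_of_ne (Finset.mem_filter.mp hi).2.symm) ht

theorem Matrix.IsHermitian.shiftedPdet_zero {N : ℕ} {S : Matrix (Fin N) (Fin N) ℝ}
    (hS : S.IsHermitian) :
    hS.shiftedPdet 0 = pdet S hS := by
  simp only [IsHermitian.shiftedPdet, add_zero, pdet]

section BhattacharyyaRatio

variable {n : Type*} [Fintype n] [DecidableEq n]

theorem sqrt_det_add_smul_one_mul_det_add_smul_one {S₁ S₂ : Matrix n n ℝ}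
    (h₁ : S₁.PosSemidef) (h₂ : S₂.PosSemidef) {k : ℕ}
    (hk : (Fintype.card n - S₁.rank) + (Fintype.card n - S₂.rank) = 2 * k) {t : ℝ} (ht : 0 ≤ t) :
    √((S₁ + t • 1).det * (S₂ + t • 1).det) =
      √(h₁.isHermitian.shiftedPdet t * h₂.isHermitian.shiftedPdet t) * t ^ k := by
  rw [h₁.isHermitian.det_add_smul_one_eq_shiftedPdet_mul_pow,
    h₂.isHermitian.det_add_smul_one_eq_shiftedPdet_mul_pow,
    mul_mul_mul_comm, ← pow_add, hk, pow_mul', Real.sqrt_mul, Real.sqrt_sq (by positivity)]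
  exact (mul_pos (h₁.shiftedPdet_pos ht) (h₂.shiftedPdet_pos ht)).le

theorem tendsto_bhattacharyya_det_ratio {S₁ S₂ : Matrix n n ℝ}
    (h₁ : S₁.PosSemidef) (h₂ : S₂.PosSemidef)
    (hrank : S₁.rank + S₂.rank = 2 * (S₁ + S₂).rank) :
    Tendsto (fun t : ℝ => ((1 / 2 : ℝ) • (S₁ + S₂) + t • 1).det /
        √((S₁ + t • 1).det * (S₂ + t • 1).det))
      (nhdsWithin 0 (Set.Ioi 0))
      (nhds ((2 ^ (S₁ + S₂).rank)⁻¹ * ((h₁.add h₂).isHermitian.shiftedPdet 0 /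
        √(h₁.isHermitian.shiftedPdet 0 * h₂.isHermitian.shiftedPdet 0)))) := by
  set hM := (h₁.add h₂).isHermitian
  have hk : (Fintype.card n - S₁.rank) + (Fintype.card n - S₂.rank) =
      2 * (Fintype.card n - (S₁ + S₂).rank) := by
    have := rank_le_card_width S₁
    have := rank_le_card_width S₂
    have := rank_le_card_width (S₁ + S₂)
    omega
  let g : ℝ → ℝ := fun t => (2 ^ (S₁ + S₂).rank)⁻¹ * (hM.shiftedPdet (2 * t) /
    √(h₁.isHermitian.shiftedPdet t * h₂.isHermitian.shiftedPdet t))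
  have hden_pos : ∀ t : ℝ, 0 ≤ t →
      0 < √(h₁.isHermitian.shiftedPdet t * h₂.isHermitian.shiftedPdet t) := fun t ht =>
    Real.sqrt_pos.mpr (mul_pos (h₁.shiftedPdet_pos ht) (h₂.shiftedPdet_pos ht))
  have hg_cont : ContinuousAt g 0 := by
    refine continuousAt_const.mul (ContinuousAt.div ?_ ?_ (hden_pos 0 le_rfl).ne')
    · exact (hM.continuous_shiftedPdet.comp (continuous_const.mul continuous_id)).continuousAt
    · exact ((h₁.isHermitian.continuous_shiftedPdet.mul
        h₂.isHermitian.continuous_shiftedPdet).sqrt).continuousAt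
  have hg_eq : g =ᶠ[nhdsWithin 0 (Set.Ioi 0)] fun t => ((1 / 2 : ℝ) • (S₁ + S₂) + t • 1).det /
      √((S₁ + t • 1).det * (S₂ + t • 1).det) := by
    filter_upwards [self_mem_nhdsWithin] with t (ht : 0 < t)
    rw [hM.det_half_smul_add_smul_one, sqrt_det_add_smul_one_mul_det_add_smul_one h₁ h₂ hk ht.le]
    have := (hden_pos t ht.le).ne'
    have := pow_ne_zero (Fintype.card n - (S₁ + S₂).rank) ht.ne'
    simp only [g]
    field_simp
  simpa [g] using hg_cont.continuousWithinAt.tendsto.congr' hg_eq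

end BhattacharyyaRatio

theorem not_tendsto_mul_exp_neg_half_log_zero {α : Type*} {l : Filter α} [l.NeBot]
    {f : α → ℝ} {L : ℝ} (hf : Tendsto f l (nhds L)) (hL : L ≠ 0) {c : ℝ} (hc : c ≠ 0) :
    ¬ Tendsto (fun x => c * Real.exp (-(1 / 2 : ℝ) * Real.log (f x))) l (nhds 0) := by
  intro h0
  have hlim := (tendsto_const_nhds (x := c)).mul (((hf.log hL).const_mul (-(1 / 2 : ℝ))).rexp)
  exact mul_ne_zero hc (Real.exp_pos _).ne' (tendsto_nhds_unique hlim h0)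

theorem stmt_7_general (N : ℕ) (S₁ S₂ : Matrix (Fin N) (Fin N) ℝ)
    (h₁ : S₁.PosSemidef) (h₂ : S₂.PosSemidef)
    (hrank : S₁.rank + S₂.rank = 2 * (S₁ + S₂).rank)
    (P₁ P₂ : ℝ) (hP₁ : 0 < P₁) (hP₂ : 0 < P₂) :
    Tendsto
      (fun t : ℝ =>
        ((1 / 2 : ℝ) • (S₁ + S₂) + t • (1 : Matrix (Fin N) (Fin N) ℝ)).det /
          Real.sqrt ((S₁ + t • (1 : Matrix (Fin N) (Fin N) ℝ)).det *
            (S₂ + t • (1 : Matrix (Fin N) (Fin N) ℝ)).det))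
      (nhdsWithin 0 (Set.Ioi 0))
      (nhds ((2 : ℝ) ^ (-((S₁ + S₂).rank : ℝ)) *
        (pdet (S₁ + S₂) (h₁.add h₂).isHermitian /
          Real.sqrt (pdet S₁ h₁.isHermitian * pdet S₂ h₂.isHermitian)))) ∧
    ¬ Tendsto
      (fun t : ℝ =>
        Real.sqrt (P₁ * P₂) *
          Real.exp (-(1 / 2 : ℝ) * Real.log
            (((1 / 2 : ℝ) • (S₁ + S₂) + t • (1 : Matrix (Fin N) (Fin N) ℝ)).det /
              Real.sqrt ((S₁ + t • (1 : Matrix (Fin N) (Fin N) ℝ)).det *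
                (S₂ + t • (1 : Matrix (Fin N) (Fin N) ℝ)).det))))
      (nhdsWithin 0 (Set.Ioi 0)) (nhds 0) := by
  have hlim := tendsto_bhattacharyya_det_ratio h₁ h₂ hrank
  have hL : 0 < (2 ^ (S₁ + S₂).rank : ℝ)⁻¹ * ((h₁.add h₂).isHermitian.shiftedPdet 0 /
      √(h₁.isHermitian.shiftedPdet 0 * h₂.isHermitian.shiftedPdet 0)) := by
    have := (h₁.add h₂).shiftedPdet_pos le_rfl
    have := h₁.shiftedPdet_pos le_rfl
    have := h₂.shiftedPdet_pos le_rfl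
    positivity
  simp only [IsHermitian.shiftedPdet_zero] at hlim hL
  rw [← Real.rpow_natCast, ← Real.rpow_neg zero_le_two] at hlim hL
  exact ⟨hlim, not_tendsto_mul_exp_neg_half_log_zero hlim hL.ne'
    (Real.sqrt_pos.mpr (mul_pos hP₁ hP₂)).ne'⟩

theorem stmt_7 (N : ℕ) (S₁ S₂ : Matrix (Fin N) (Fin N) ℝ)
    (h₁ : S₁.PosSemidef) (h₂ : S₂.PosSemidef)
    (hrank : S₁.rank + S₂.rank = 2 * (S₁ + S₂).rank)
    (P₁ P₂ : ℝ) (hP₁ : 0 < P₁) (hP₂ : 0 < P₂) (hP : P₁ + P₂ = 1) :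
    Tendsto
      (fun t : ℝ =>
        ((1 / 2 : ℝ) • (S₁ + S₂) + t • (1 : Matrix (Fin N) (Fin N) ℝ)).det /
          Real.sqrt ((S₁ + t • (1 : Matrix (Fin N) (Fin N) ℝ)).det *
            (S₂ + t • (1 : Matrix (Fin N) (Fin N) ℝ)).det))
      (nhdsWithin 0 (Set.Ioi 0))
      (nhds ((2 : ℝ) ^ (-((S₁ + S₂).rank : ℝ)) *
        (pdet (S₁ + S₂) (h₁.add h₂).isHermitian /
          Real.sqrt (pdet S₁ h₁.isHermitian * pdet S₂ h₂.isHermitian)))) ∧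
    ¬ Tendsto
      (fun t : ℝ =>
        Real.sqrt (P₁ * P₂) *
          Real.exp (-(1 / 2 : ℝ) * Real.log
            (((1 / 2 : ℝ) • (S₁ + S₂) + t • (1 : Matrix (Fin N) (Fin N) ℝ)).det /
              Real.sqrt ((S₁ + t • (1 : Matrix (Fin N) (Fin N) ℝ)).det *
                (S₂ + t • (1 : Matrix (Fin N) (Fin N) ℝ)).det))))
      (nhdsWithin 0 (Set.Ioi 0)) (nhds 0) :=
  stmt_7_general N S₁ S₂ h₁ h₂ hrank P₁ P₂ hP₁ hP₂
end

section
/- Let S₁, S₂ be positive semidefinite with (rank(S₁)+rank(S₂))/2 < rank(S₁+S₂). Then the Bhattacharyya bound P_err^{UB}(σ²) = sqrt(P₁P₂)·sqrt(det(S₁+σ²I)·det(S₂+σ²I))^{1/2} / det((S₁+S₂)/2+σ²I)^{1/2} tends to 0 as σ²→0, and log P_err^{UB}(σ²)/log σ² → −(1/2)·((r₁+r₂)/2 − r₁₂), where r₁=rank(S₁), r₂=rank(S₂), r₁₂=rank(S₁+S₂); i.e., the diversity-order equals (2r₁₂ − r₁ − r₂)/4. -/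
/-!
For positive semidefinite `S`, `det (S + t • 1) = ∏ i, (λᵢ + t)` is `t ^ (N - rank S)` times the
product of `λᵢ + t` over the nonzero eigenvalues, a function continuous and positive at `t = 0`.
This power-like behaviour as `t → 0⁺` is stable under products, quotients and real powers, so the
Bhattacharyya bound behaves like `t ^ d` with `d = -(1/2) ((r₁ + r₂) / 2 - r₁₂) > 0`; hence it tends
to `0`, and `log P / log t → d`.
-/

open Matrix Filter Topology

def IsPowerLikeAtZero (f : ℝ → ℝ) (a : ℝ) : Prop :=
  ∃ g : ℝ → ℝ, ContinuousAt g 0 ∧ 0 < g 0 ∧ f =ᶠ[𝓝[>] 0] fun t => t ^ a * g t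

namespace IsPowerLikeAtZero

variable {f h : ℝ → ℝ} {a b : ℝ}

lemma congr (hf : IsPowerLikeAtZero f a) {f' : ℝ → ℝ} (hff' : f =ᶠ[𝓝[>] 0] f') :
    IsPowerLikeAtZero f' a :=
  let ⟨g, hg, hg0, hfg⟩ := hf
  ⟨g, hg, hg0, hff'.symm.trans hfg⟩

lemma const_mul (hf : IsPowerLikeAtZero f a) {c : ℝ} (hc : 0 < c) :
    IsPowerLikeAtZero (fun t => c * f t) a := by
  obtain ⟨g, hg, hg0, hfg⟩ := hf
  refine ⟨fun t => c * g t, continuousAt_const.mul hg, mul_pos hc hg0, ?_⟩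
  filter_upwards [hfg] with t ht
  rw [ht]; ring

lemma mul (hf : IsPowerLikeAtZero f a) (hh : IsPowerLikeAtZero h b) :
    IsPowerLikeAtZero (fun t => f t * h t) (a + b) := by
  obtain ⟨g, hg, hg0, hfg⟩ := hf
  obtain ⟨k, hk, hk0, hhk⟩ := hh
  refine ⟨fun t => g t * k t, hg.mul hk, mul_pos hg0 hk0, ?_⟩
  filter_upwards [hfg, hhk, self_mem_nhdsWithin] with t hft hht (ht : 0 < t)
  rw [hft, hht, Real.rpow_add ht]; ring

lemma div (hf : IsPowerLikeAtZero f a) (hh : IsPowerLikeAtZero h b) :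
    IsPowerLikeAtZero (fun t => f t / h t) (a - b) := by
  obtain ⟨g, hg, hg0, hfg⟩ := hf
  obtain ⟨k, hk, hk0, hhk⟩ := hh
  refine ⟨fun t => g t / k t, hg.div hk hk0.ne', div_pos hg0 hk0, ?_⟩
  filter_upwards [hfg, hhk, self_mem_nhdsWithin] with t hft hht (ht : 0 < t)
  rw [hft, hht, Real.rpow_sub ht]; field_simp

lemma rpow (hf : IsPowerLikeAtZero f a) (p : ℝ) :
    IsPowerLikeAtZero (fun t => f t ^ p) (a * p) := by
  obtain ⟨g, hg, hg0, hfg⟩ := hf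
  refine ⟨fun t => g t ^ p, hg.rpow_const (Or.inl hg0.ne'), Real.rpow_pos_of_pos hg0 p, ?_⟩
  filter_upwards [hfg, self_mem_nhdsWithin,
    (hg.eventually (lt_mem_nhds hg0)).filter_mono nhdsWithin_le_nhds] with t hft (ht : 0 < t) hgt
  rw [hft, Real.mul_rpow (Real.rpow_nonneg ht.le a) hgt.le, Real.rpow_mul ht.le]

lemma sqrt (hf : IsPowerLikeAtZero f a) : IsPowerLikeAtZero (fun t => √(f t)) (a / 2) := by
  have := hf.rpow (1 / 2)
  simp only [← Real.sqrt_eq_rpow, mul_one_div] at this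
  exact this

lemma tendsto_zero (hf : IsPowerLikeAtZero f a) (ha : 0 < a) : Tendsto f (𝓝[>] 0) (𝓝 0) := by
  obtain ⟨g, hg, -, hfg⟩ := hf
  have hpow : ContinuousAt (fun t : ℝ => t ^ a) 0 := Real.continuousAt_rpow_const 0 a (Or.inr ha.le)
  have : Tendsto (fun t => t ^ a * g t) (𝓝[>] 0) (𝓝 (0 ^ a * g 0)) :=
    (hpow.mul hg).tendsto.mono_left nhdsWithin_le_nhds
  rw [Real.zero_rpow ha.ne', zero_mul] at this
  exact this.congr' hfg.symm

lemma tendsto_log_div_log (hf : IsPowerLikeAtZero f a) :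
    Tendsto (fun t => Real.log (f t) / Real.log t) (𝓝[>] 0) (𝓝 a) := by
  obtain ⟨g, hg, hg0, hfg⟩ := hf
  have hlog_inv : Tendsto (fun t => (Real.log t)⁻¹) (𝓝[>] 0) (𝓝 0) :=
    tendsto_inv_atBot_zero.comp Real.tendsto_log_nhdsGT_zero
  have hlog_g : Tendsto (fun t => Real.log (g t)) (𝓝[>] 0) (𝓝 (Real.log (g 0))) :=
    ((Real.continuousAt_log hg0.ne').comp hg).tendsto.mono_left nhdsWithin_le_nhds
  have := (hlog_g.mul hlog_inv).const_add a
  rw [mul_zero, add_zero] at this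
  refine this.congr' ?_
  filter_upwards [hfg, self_mem_nhdsWithin, (hg.eventually (lt_mem_nhds hg0)).filter_mono
    nhdsWithin_le_nhds, Ioo_mem_nhdsGT one_pos] with t hft (ht : 0 < t) hgt ht1
  have hlog : Real.log t ≠ 0 := (Real.log_neg ht ht1.2).ne
  rw [hft, Real.log_mul (Real.rpow_pos_of_pos ht a).ne' hgt.ne', Real.log_rpow ht]
  field_simp

end IsPowerLikeAtZero

section Matrix

variable {n : Type*} [Fintype n] [DecidableEq n]

lemma Matrix.IsHermitian.det_add_smul_one_s8 {A : Matrix n n ℝ} (hA : A.IsHermitian) (t : ℝ) :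
    (A + t • 1).det = ∏ i, (hA.eigenvalues i + t) := by
  have hchar := congrArg (Polynomial.eval (-t)) hA.charpoly_eq
  rw [eval_charpoly, Polynomial.eval_prod] at hchar
  have hneg : A + t • 1 = -(scalar n (-t) - A) := by
    ext i j; by_cases hij : i = j <;> simp [hij]
  rw [hneg, det_neg, hchar, ← Finset.card_univ, ← Finset.prod_const, ← Finset.prod_mul_distrib]
  simp

lemma Matrix.PosSemidef.isPowerLikeAtZero_det_add_smul_one {S : Matrix n n ℝ}
    (hS : S.PosSemidef) :
    IsPowerLikeAtZero (fun t => (S + t • 1).det) (Fintype.card n - S.rank) := by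
  set μ := hS.isHermitian.eigenvalues
  have hdet : ∀ t : ℝ, (S + t • 1).det = ∏ i, (μ i + t) := hS.isHermitian.det_add_smul_one_s8
  have hcard : (Finset.univ.filter (fun i => μ i = 0)).card = Fintype.card n - S.rank := by
    have hrank : S.rank = (Finset.univ.filter (fun i => ¬μ i = 0)).card :=
      hS.isHermitian.rank_eq_card_non_zero_eigs.trans (Fintype.card_subtype _)
    rw [hrank, ← Finset.card_univ]
    exact Nat.eq_sub_of_add_eq (Finset.card_filter_add_card_filter_not _)
  refine ⟨fun t => ∏ i ∈ Finset.univ with μ i ≠ 0, (μ i + t),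
    (continuous_finsetProd _ fun i _ => by fun_prop).continuousAt,
    Finset.prod_pos fun i hi => ?_, .of_forall fun t => ?_⟩
  · rw [add_zero]
    exact (hS.eigenvalues_nonneg i).lt_of_ne' (Finset.mem_filter.mp hi).2
  · dsimp only
    rw [← Nat.cast_sub S.rank_le_card_width, ← hcard, Real.rpow_natCast, hdet,
      ← Finset.prod_filter_mul_prod_filter_not _ (μ · = 0),
      Finset.prod_congr rfl fun i hi => by rw [(Finset.mem_filter.mp hi).2, zero_add],
      Finset.prod_const]

end Matrix

theorem stmt_8_general (N : ℕ) (S₁ S₂ : Matrix (Fin N) (Fin N) ℝ)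
    (h₁ : S₁.PosSemidef) (h₂ : S₂.PosSemidef)
    (hrank : S₁.rank + S₂.rank < 2 * (S₁ + S₂).rank)
    (P₁ P₂ : ℝ) (hP₁ : 0 < P₁) (hP₂ : 0 < P₂)
    (Perr : ℝ → ℝ)
    (hPerr : ∀ t : ℝ, 0 < t →
      Perr t = Real.sqrt (P₁ * P₂) *
        (((1 / 2 : ℝ) • (S₁ + S₂) + t • (1 : Matrix (Fin N) (Fin N) ℝ)).det /
          Real.sqrt ((S₁ + t • (1 : Matrix (Fin N) (Fin N) ℝ)).det *
            (S₂ + t • (1 : Matrix (Fin N) (Fin N) ℝ)).det)) ^ (-(1 / 2 : ℝ))) :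
    Tendsto Perr (nhdsWithin 0 (Set.Ioi 0)) (nhds 0) ∧
    Tendsto (fun t : ℝ => Real.log (Perr t) / Real.log t)
      (nhdsWithin 0 (Set.Ioi 0))
      (nhds (-(1 / 2 : ℝ) * (((S₁.rank : ℝ) + S₂.rank) / 2 - (S₁ + S₂).rank))) := by
  have hmean_rank : ((1 / 2 : ℝ) • (S₁ + S₂)).rank = (S₁ + S₂).rank :=
    rank_smul_of_mem_nonZeroDivisors _ (mem_nonZeroDivisors_of_ne_zero (by norm_num))
  have hmean := ((h₁.add h₂).smul (by norm_num : (0 : ℝ) ≤ 1 / 2))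
  have hbound := ((hmean.isPowerLikeAtZero_det_add_smul_one.div
    (h₁.isPowerLikeAtZero_det_add_smul_one.mul
      h₂.isPowerLikeAtZero_det_add_smul_one).sqrt).rpow (-(1 / 2))).const_mul
    (Real.sqrt_pos.mpr (mul_pos hP₁ hP₂))
  replace hbound := hbound.congr (eventually_mem_nhdsWithin.mono fun t ht => (hPerr t ht).symm)
  have hexponent : ∀ r₁ r₂ r₁₂ : ℝ, (N - r₁₂ - (N - r₁ + (N - r₂)) / 2) * -(1 / 2) =
      -(1 / 2) * ((r₁ + r₂) / 2 - r₁₂) := by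
    intros; ring
  rw [hmean_rank, Fintype.card_fin, hexponent] at hbound
  refine ⟨hbound.tendsto_zero ?_, hbound.tendsto_log_div_log⟩
  have : (S₁.rank + S₂.rank : ℝ) < 2 * (S₁ + S₂).rank := by exact_mod_cast hrank
  linarith

theorem stmt_8 (N : ℕ) (S₁ S₂ : Matrix (Fin N) (Fin N) ℝ)
    (h₁ : S₁.PosSemidef) (h₂ : S₂.PosSemidef)
    (hrank : S₁.rank + S₂.rank < 2 * (S₁ + S₂).rank)
    (P₁ P₂ : ℝ) (hP₁ : 0 < P₁) (hP₂ : 0 < P₂) (hP : P₁ + P₂ = 1)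
    (Perr : ℝ → ℝ)
    (hPerr : ∀ t : ℝ, 0 < t →
      Perr t = Real.sqrt (P₁ * P₂) *
        (((1 / 2 : ℝ) • (S₁ + S₂) + t • (1 : Matrix (Fin N) (Fin N) ℝ)).det /
          Real.sqrt ((S₁ + t • (1 : Matrix (Fin N) (Fin N) ℝ)).det *
            (S₂ + t • (1 : Matrix (Fin N) (Fin N) ℝ)).det)) ^ (-(1 / 2 : ℝ))) :
    Tendsto Perr (nhdsWithin 0 (Set.Ioi 0)) (nhds 0) ∧
    Tendsto (fun t : ℝ => Real.log (Perr t) / Real.log t)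
      (nhdsWithin 0 (Set.Ioi 0))
      (nhds (-(1 / 2 : ℝ) * (((S₁.rank : ℝ) + S₂.rank) / 2 - (S₁ + S₂).rank))) :=
  stmt_8_general N S₁ S₂ h₁ h₂ hrank P₁ P₂ hP₁ hP₂ Perr hPerr
end

section
/- Let Φ ∈ ℝ^{M×N} and let S₁, S₂ ∈ ℝ^{N×N} be positive semidefinite. Then rank(Φ(S₁+S₂)Φᵀ) − rank(ΦS₁Φᵀ) ≤ rank(S₁+S₂) − rank(S₁), and symmetrically rank(Φ(S₁+S₂)Φᵀ) − rank(ΦS₂Φᵀ) ≤ rank(S₁+S₂) − rank(S₂). -/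
/-!
For positive semidefinite `S`, `ker (S₁ + S₂) = ker S₁ ⊓ ker S₂` and `ker (Φ S Φᵀ)` is the preimage
of `ker S` under `Φᵀ`. By rank–nullity both sides of the inequality are therefore differences of
dimensions of nested kernels, and taking preimages under a linear map cannot increase the relative
dimension of a pair of nested subspaces.
-/

open Matrix Module

namespace Submodule

variable {K V W : Type*} [DivisionRing K] [AddCommGroup V] [Module K V] [AddCommGroup W]
  [Module K W]

theorem finrank_comap_eq_finrank_inf_range_add_finrank_ker [FiniteDimensional K V]
    (f : V →ₗ[K] W) (q : Submodule K W) :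
    finrank K (q.comap f) = finrank K ↥(LinearMap.range f ⊓ q) + finrank K (LinearMap.ker f) := by
  have h := LinearMap.finrank_range_add_finrank_ker (f.domRestrict (q.comap f))
  rwa [LinearMap.range_domRestrict, map_comap_eq, LinearMap.ker_domRestrict,
    (comapSubtypeEquivOfLe (LinearMap.ker_le_comap f)).finrank_eq, eq_comm] at h

theorem finrank_comap_add_finrank_le [FiniteDimensional K V] [FiniteDimensional K W]
    (f : V →ₗ[K] W) {q q' : Submodule K W} (h : q ≤ q') :
    finrank K (q'.comap f) + finrank K q ≤ finrank K (q.comap f) + finrank K q' := by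
  have hmod := finrank_sup_add_finrank_inf_eq (LinearMap.range f ⊓ q') q
  rw [inf_assoc, inf_eq_right.mpr h] at hmod
  have hsup : finrank K ↥(LinearMap.range f ⊓ q' ⊔ q) ≤ finrank K q' :=
    finrank_mono (sup_le inf_le_right h)
  rw [finrank_comap_eq_finrank_inf_range_add_finrank_ker f q,
    finrank_comap_eq_finrank_inf_range_add_finrank_ker f q']
  omega

end Submodule

namespace Matrix

open scoped ComplexOrder

theorem rank_add_finrank_ker_mulVecLin_s9 {K m n : Type*} [Field K] [Fintype n]
    (A : Matrix m n K) :
    A.rank + finrank K (LinearMap.ker A.mulVecLin) = Fintype.card n := by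
  rw [rank, LinearMap.finrank_range_add_finrank_ker, finrank_fintype_fun_eq_card]

variable {𝕜 m n : Type*} [RCLike 𝕜] [Fintype n]

theorem PosSemidef.ker_mulVecLin_add_s9 {S T : Matrix n n 𝕜} (hS : S.PosSemidef)
    (hT : T.PosSemidef) :
    LinearMap.ker (S + T).mulVecLin = LinearMap.ker S.mulVecLin ⊓ LinearMap.ker T.mulVecLin := by
  ext x
  simp only [Submodule.mem_inf, LinearMap.mem_ker, mulVecLin_apply, add_mulVec]
  refine ⟨fun hx => ?_, fun ⟨hSx, hTx⟩ => by rw [hSx, hTx, add_zero]⟩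
  have hsum : star x ⬝ᵥ S *ᵥ x + star x ⬝ᵥ T *ᵥ x = 0 := by
    rw [← dotProduct_add, hx, dotProduct_zero]
  obtain ⟨hSx, hTx⟩ := (add_eq_zero_iff_of_nonneg (hS.dotProduct_mulVec_nonneg x)
    (hT.dotProduct_mulVec_nonneg x)).mp hsum
  exact ⟨(hS.dotProduct_mulVec_zero_iff x).mp hSx, (hT.dotProduct_mulVec_zero_iff x).mp hTx⟩

variable [Fintype m]

theorem PosSemidef.ker_mulVecLin_mul_mul_conjTranspose {S : Matrix n n 𝕜} (hS : S.PosSemidef)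
    (A : Matrix m n 𝕜) :
    LinearMap.ker (A * S * Aᴴ).mulVecLin = (LinearMap.ker S.mulVecLin).comap Aᴴ.mulVecLin := by
  ext x
  simp only [Submodule.mem_comap, LinearMap.mem_ker, mulVecLin_apply]
  rw [← (hS.mul_mul_conjTranspose_same A).dotProduct_mulVec_zero_iff,
    ← hS.dotProduct_mulVec_zero_iff, ← mulVec_mulVec, ← mulVec_mulVec, dotProduct_mulVec,
    star_mulVec, conjTranspose_conjTranspose]

theorem PosSemidef.rank_mul_add_mul_conjTranspose_add_rank_le {S T : Matrix n n 𝕜}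
    (hS : S.PosSemidef) (hT : T.PosSemidef) (A : Matrix m n 𝕜) :
    (A * (S + T) * Aᴴ).rank + S.rank ≤ (A * S * Aᴴ).rank + (S + T).rank := by
  have hle : LinearMap.ker (S + T).mulVecLin ≤ LinearMap.ker S.mulVecLin := by
    rw [hS.ker_mulVecLin_add_s9 hT]
    exact inf_le_left
  have key := Submodule.finrank_comap_add_finrank_le Aᴴ.mulVecLin hle
  have hASTA := rank_add_finrank_ker_mulVecLin_s9 (A * (S + T) * Aᴴ)
  have hASA := rank_add_finrank_ker_mulVecLin_s9 (A * S * Aᴴ)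
  rw [(hS.add hT).ker_mulVecLin_mul_mul_conjTranspose] at hASTA
  rw [hS.ker_mulVecLin_mul_mul_conjTranspose] at hASA
  have := rank_add_finrank_ker_mulVecLin_s9 (S + T)
  have := rank_add_finrank_ker_mulVecLin_s9 S
  omega

end Matrix

theorem stmt_9 (M N : ℕ) (Φ : Matrix (Fin M) (Fin N) ℝ)
    (S₁ S₂ : Matrix (Fin N) (Fin N) ℝ)
    (h₁ : S₁.PosSemidef) (h₂ : S₂.PosSemidef) :
    ((Φ * (S₁ + S₂) * Φᵀ).rank : ℤ) - (Φ * S₁ * Φᵀ).rank ≤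
        ((S₁ + S₂).rank : ℤ) - S₁.rank ∧
      ((Φ * (S₁ + S₂) * Φᵀ).rank : ℤ) - (Φ * S₂ * Φᵀ).rank ≤
        ((S₁ + S₂).rank : ℤ) - S₂.rank := by
  have h₁₂ := h₁.rank_mul_add_mul_conjTranspose_add_rank_le h₂ Φ
  have h₂₁ := h₂.rank_mul_add_mul_conjTranspose_add_rank_le h₁ Φ
  rw [add_comm S₂ S₁] at h₂₁
  simp only [conjTranspose_eq_transpose_of_trivial] at h₁₂ h₂₁
  omega
end
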